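/- arXiv:1208.4383 — 3 statements merged into one kernel-verified Lean document; each statement's English description precedes it below -/
import Mathlib

section
/- A finite nilpotent semigroup of coclass r is generated by at most r+1 elements; that is, |S \ S^2| ≤ r + 1. -/
/-- `sgPow S i` is the set `Sⁱ` of all products of `i` elements of `S`
(with the convention `S⁰ = S¹ = S`). -/
def sgPow (S : Type*) [Mul S] : ℕ → Set S
  | 0 => Set.univ
  | 1 => Set.univ
  | n + 2 => Set.image2 (· * ·) (sgPow S (n + 1)) Set.univ

/-- A semigroup with zero is nilpotent of class `c` if `S^(c+1) = {0}` and `S^c ≠ {0}`. -/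
def IsNilpotentOfClass (S : Type*) [SemigroupWithZero S] (c : ℕ) : Prop :=
  sgPow S (c + 1) = {0} ∧ sgPow S c ≠ {0}

/-- `mpow x i` is the power `xⁱ` in a magma, for `i ≥ 1` (with `mpow x 0 = x` by convention). -/
def mpow {S : Type*} [Mul S] (x : S) : ℕ → S
  | 0 => x
  | 1 => x
  | n + 2 => mpow x (n + 1) * x

/-!
The powers `S = S¹ ⊇ S² ⊇ ⋯ ⊇ S^(c+1) = {0}` form a chain in which every inclusion
`S^(i+1) ⊆ S^i` with `1 ≤ i ≤ c` is strict: since `S^(i+2) = S^(i+1) S`, an equality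
`S^(i+1) = S^i` would make the chain constant from `i` on, forcing `S^c = S^(c+1)`.
Hence the `c - 1` strict steps from `S²` down to `{0}` give `|S²| ≥ c`, and
`|S \ S²| = |S| - |S²| ≤ (c + r + 1) - c = r + 1`.
-/

section Chain

variable {S : Type*}

lemma sgPow_succ_of_one_le [Mul S] {n : ℕ} (hn : 1 ≤ n) :
    sgPow S (n + 1) = Set.image2 (· * ·) (sgPow S n) Set.univ := by
  obtain ⟨k, rfl⟩ := Nat.exists_eq_add_of_le' hn
  rfl

lemma sgPow_eq_of_succ_eq [Mul S] {n : ℕ} (hn : 1 ≤ n) (h : sgPow S (n + 1) = sgPow S n)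
    {m : ℕ} (hm : n ≤ m) : sgPow S m = sgPow S n := by
  induction m, hm using Nat.le_induction with
  | base => rfl
  | succ m hnm ih => rw [sgPow_succ_of_one_le (hn.trans hnm), ih, ← sgPow_succ_of_one_le hn, h]

lemma sgPow_succ_subset [Semigroup S] : ∀ n, sgPow S (n + 1) ⊆ sgPow S n
  | 0 => subset_rfl
  | 1 => Set.subset_univ _
  | n + 2 => by
      rintro _ ⟨_, ⟨p, hp, t, -, rfl⟩, s, -, rfl⟩
      exact ⟨p, hp, t * s, trivial, (mul_assoc p t s).symm⟩

lemma sgPow_succ_ssubset_of_ne [Semigroup S] {c i : ℕ} (hc : sgPow S (c + 1) ≠ sgPow S c)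
    (hi : 1 ≤ i) (hic : i ≤ c) : sgPow S (i + 1) ⊂ sgPow S i := by
  refine (sgPow_succ_subset i).ssubset_of_ne fun h => hc ?_
  rw [sgPow_eq_of_succ_eq hi h (by omega), sgPow_eq_of_succ_eq hi h hic]

end Chain

lemma Set.ncard_add_le_of_ssubset_chain {α : Type*} [Finite α] {s : ℕ → Set α} {n m : ℕ}
    (hnm : n ≤ m) (h : ∀ i, n ≤ i → i < m → s (i + 1) ⊂ s i) :
    (s m).ncard + (m - n) ≤ (s n).ncard := by
  induction m, hnm using Nat.le_induction with
  | base => simp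
  | succ m hnm ih =>
      have hstep := Set.ncard_lt_ncard (h m hnm m.lt_succ_self)
      have := ih fun i hni him => h i hni (by omega)
      omega

/-- A finite nilpotent semigroup of coclass `r` is generated by at most `r + 1` elements:
its unique minimal generating set `S \ S²` has at most `r + 1` elements. -/
theorem statement2 {S : Type*} [SemigroupWithZero S] [Finite S] (c r : ℕ)
    (hS : IsNilpotentOfClass S c) (hcc : Nat.card {s : S // s ≠ 0} = c + r) :
    {s : S | s ∉ sgPow S 2}.ncard ≤ r + 1 := by
  obtain ⟨hzero, hne⟩ := hS
  have hc : c ≠ 0 := by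
    rintro rfl
    exact hne hzero
  have hchain : (sgPow S (c + 1)).ncard + (c + 1 - 2) ≤ (sgPow S 2).ncard :=
    Set.ncard_add_le_of_ssubset_chain (s := sgPow S) (by omega) fun i hi hic =>
      sgPow_succ_ssubset_of_ne (by rwa [hzero, ne_comm]) (by omega) (by omega)
  rw [hzero, Set.ncard_singleton] at hchain
  have hcardS : Nat.card S = c + r + 1 := by
    rw [← hcc, ← Set.ncard_add_ncard_compl {(0 : S)}, Set.ncard_singleton, add_comm]
    rfl
  have hsplit := Set.ncard_add_ncard_compl (sgPow S 2)
  change (sgPow S 2)ᶜ.ncard ≤ r + 1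
  omega
end

section
/- Let A be an associative non-unital algebra over a field K with dim(A^i/A^{i+1}) = 1 for all i ≥ 2. If v, w, x ∈ A are such that vwx spans A^3 modulo A^4, then x^i spans A^i modulo A^{i+1} for every i ≥ 2. -/
section AlgebraDefs

variable (K : Type*) [Field K] (A : Type*) [NonUnitalRing A] [Module K A]
  [SMulCommClass K A A] [IsScalarTower K A A]

/-- `algPow K A i` is the submodule `Aⁱ` spanned by all products of `i` elements
(with `A⁰ = A¹ = A`). -/
def algPow : ℕ → Submodule K A
  | 0 => ⊤
  | 1 => ⊤
  | n + 2 => Submodule.span K (Set.image2 (· * ·) ((algPow (n + 1) : Submodule K A) : Set A) Set.univ)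

/-- The dimension of the layer `Aⁱ/Aⁱ⁺¹`. -/
noncomputable def algLayerDim (i : ℕ) : ℕ :=
  Module.finrank K
    (↥(algPow K A i) ⧸ (algPow K A (i + 1)).comap (algPow K A i).subtype)

/-- The coclass of the nilpotent quotient `A/Aⁱ`, namely `dim (A/Aⁱ) - (i - 1)`. -/
noncomputable def algCcQuot (i : ℕ) : ℕ :=
  Module.finrank K (A ⧸ algPow K A i) - (i - 1)

/-- A finitely generated residually nilpotent algebra has coclass `r` if the coclasses
of its nilpotent quotients `A/Aⁱ` converge to `r`. -/
def HasCoclassAlg (r : ℕ) : Prop :=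
  ∀ᶠ i in Filter.atTop, algCcQuot K A i = r

/-- The two-sided annihilator of an algebra, as a submodule. -/
def twoSidedAnn : Submodule K A where
  carrier := {a | (∀ b, a * b = 0) ∧ ∀ b, b * a = 0}
  add_mem' := by
    intro a b ha hb
    exact ⟨fun c => by rw [add_mul, ha.1 c, hb.1 c, add_zero],
           fun c => by rw [mul_add, ha.2 c, hb.2 c, add_zero]⟩
  zero_mem' := ⟨fun b => zero_mul b, fun b => mul_zero b⟩
  smul_mem' := by
    intro k a ha
    exact ⟨fun b => by rw [smul_mul_assoc, ha.1 b, smul_zero],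
           fun b => by rw [mul_smul_comm, ha.2 b, smul_zero]⟩

/-- The right annihilator of an algebra, as a submodule. -/
def rightAnn : Submodule K A where
  carrier := {a | ∀ b, b * a = 0}
  add_mem' := by
    intro a b ha hb c
    rw [mul_add, ha c, hb c, add_zero]
  zero_mem' := fun b => mul_zero b
  smul_mem' := by
    intro k a ha b
    rw [mul_smul_comm, ha b, smul_zero]

end AlgebraDefs

/-- `IsContractedAlgebra K f` asserts that `f : S → A` exhibits the algebra `A` as the
contracted semigroup algebra of the semigroup-with-zero `S` over the field `K`:
`f` is multiplicative, sends zero to zero, and the images of the non-zero elements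
of `S` form a `K`-basis of `A`. -/
def IsContractedAlgebra (K : Type*) [Field K] {S A : Type*} [SemigroupWithZero S]
    [NonUnitalRing A] [Module K A] (f : S → A) : Prop :=
  f 0 = 0 ∧ (∀ s t : S, f (s * t) = f s * f t) ∧
  LinearIndependent K (fun s : {s : S // s ≠ 0} => f s.1) ∧
  Submodule.span K (Set.range fun s : {s : S // s ≠ 0} => f s.1) = ⊤

/-! Since every layer `Aⁱ/Aⁱ⁺¹` with `i ≥ 2` is a line, an element of `Aⁱ` spans it exactly when
it lies outside `Aⁱ⁺¹`. As `vwx ∉ A⁴`, also `vw ∉ A³`, so `vw` spans `A²/A³`. Writing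
`wx = t + μ vw` with `t ∈ A³` and multiplying by `x` on the right shows `x² ∉ A³`: otherwise
`μ vwx = w x² - t x ∈ A⁴` forces `μ = 0`, and then `vwx = vt ∈ A⁴`. Once `x²` spans `A²/A³`,
every product `xⁱ a = xⁱ⁻¹ (x a)` lies in `Aⁱ⁺² + K xⁱ⁺¹`, so the spanning property passes from
`Aⁱ` to `Aⁱ⁺¹`; this step uses no dimension hypothesis. -/

lemma mpow_succ_mul {S : Type*} [Semigroup S] (x d : S) :
    ∀ {n : ℕ}, 1 ≤ n → mpow x (n + 1) * d = mpow x n * (x * d)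
  | n + 1, _ => mul_assoc (mpow x (n + 1)) x d

section AlgPow

variable {K : Type*} [Field K] {A : Type*} [NonUnitalRing A] [Module K A]

lemma algPow_add_two (n : ℕ) : algPow K A (n + 2) =
    Submodule.span K (Set.image2 (· * ·) (algPow K A (n + 1) : Set A) Set.univ) := rfl

lemma algPow_succ_le : ∀ n, algPow K A (n + 1) ≤ algPow K A n
  | 0 | 1 => le_top
  | n + 2 =>
    Submodule.span_mono (Set.image2_subset (SetLike.coe_mono (algPow_succ_le (n + 1))) le_rfl)

lemma mul_mem_algPow_succ {i : ℕ} {a : A} (ha : a ∈ algPow K A i) (b : A) :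
    a * b ∈ algPow K A (i + 1) := by
  cases i with
  | zero => exact Submodule.mem_top
  | succ n => exact Submodule.subset_span (Set.mem_image2_of_mem ha (Set.mem_univ b))

lemma mpow_mem_algPow (x : A) : ∀ n, mpow x n ∈ algPow K A n
  | 0 | 1 => Submodule.mem_top
  | n + 2 => mul_mem_algPow_succ (mpow_mem_algPow x (n + 1)) x

lemma algLayerDim_eq_zero_of_le {i : ℕ} (h : algPow K A i ≤ algPow K A (i + 1)) :
    algLayerDim K A i = 0 := by
  rw [algLayerDim, Submodule.comap_subtype_eq_top.2 h]
  exact Module.finrank_zero_of_subsingleton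

lemma algPow_eq_sup_span_iff {i : ℕ} (hi : algLayerDim K A i = 1) {u : A} :
    algPow K A i = algPow K A (i + 1) ⊔ Submodule.span K {u} ↔
      u ∈ algPow K A i ∧ u ∉ algPow K A (i + 1) := by
  constructor
  · intro h
    refine ⟨h ▸ Submodule.mem_sup_right (Submodule.mem_span_singleton_self u), fun hu => ?_⟩
    have hle : algPow K A i ≤ algPow K A (i + 1) :=
      h ▸ sup_le le_rfl ((Submodule.span_singleton_le_iff_mem _ _).2 hu)
    exact absurd hi (by rw [algLayerDim_eq_zero_of_le hle]; omega)
  · rintro ⟨hu, hu'⟩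
    refine le_antisymm (fun a ha => ?_)
      (sup_le (algPow_succ_le i) ((Submodule.span_singleton_le_iff_mem _ _).2 hu))
    have hq : (Submodule.Quotient.mk ⟨u, hu⟩ :
        ↥(algPow K A i) ⧸ (algPow K A (i + 1)).comap (algPow K A i).subtype) ≠ 0 := by
      rwa [Ne, Submodule.Quotient.mk_eq_zero]
    obtain ⟨c, hc⟩ :=
      (finrank_eq_one_iff_of_nonzero' _ hq).1 hi (Submodule.Quotient.mk ⟨a, ha⟩)
    rw [← Submodule.Quotient.mk_smul, eq_comm, Submodule.Quotient.eq] at hc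
    exact Submodule.mem_sup.2 ⟨a - c • u, hc, c • u,
      Submodule.smul_mem _ c (Submodule.mem_span_singleton_self u), sub_add_cancel a _⟩

variable [SMulCommClass K A A]

lemma mul_mem_algPow {i : ℕ} {a : A} (ha : a ∈ algPow K A i) :
    ∀ {j : ℕ} {b : A}, b ∈ algPow K A j → a * b ∈ algPow K A (i + j)
  | 0, b, _ => algPow_succ_le i (mul_mem_algPow_succ ha b)
  | 1, b, _ => mul_mem_algPow_succ ha b
  | j + 2, b, hb => by
    induction hb using Submodule.span_induction with
    | mem c hc =>
      obtain ⟨y, hy, z, -, rfl⟩ := hc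
      rw [← mul_assoc]
      exact mul_mem_algPow_succ (mul_mem_algPow ha hy) z
    | zero => simp
    | add c d _ _ hc hd => simpa [mul_add] using add_mem hc hd
    | smul k c _ hc => simpa [mul_smul_comm] using Submodule.smul_mem _ k hc

lemma mpow_mul_mem_sup_span {x : A}
    (h2 : algPow K A 2 = algPow K A 3 ⊔ Submodule.span K {mpow x 2})
    {n : ℕ} (hn : 1 ≤ n) (d : A) :
    mpow x (n + 1) * d ∈ algPow K A (n + 3) ⊔ Submodule.span K {mpow x (n + 2)} := by
  have hxd : x * d ∈ algPow K A 2 := mul_mem_algPow_succ (i := 1) Submodule.mem_top d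
  rw [h2, Submodule.mem_sup] at hxd
  obtain ⟨t, ht, _, hs, hts⟩ := hxd
  obtain ⟨μ, rfl⟩ := Submodule.mem_span_singleton.1 hs
  have hx2 : mpow x n * mpow x 2 = mpow x (n + 2) := (mpow_succ_mul x x (by omega)).symm
  rw [mpow_succ_mul x d hn, ← hts, mul_add, mul_smul_comm, hx2]
  exact add_mem (Submodule.mem_sup_left (mul_mem_algPow (mpow_mem_algPow x n) ht))
    (Submodule.mem_sup_right (Submodule.smul_mem _ μ (Submodule.mem_span_singleton_self _)))

variable [IsScalarTower K A A]

lemma mul_self_notMem_algPow_three {v w x : A}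
    (h2 : algPow K A 2 = algPow K A 3 ⊔ Submodule.span K {v * w})
    (h4 : v * w * x ∉ algPow K A 4) : x * x ∉ algPow K A 3 := by
  intro hx
  have hwx : w * x ∈ algPow K A 2 := mul_mem_algPow_succ (i := 1) Submodule.mem_top x
  rw [h2, Submodule.mem_sup] at hwx
  obtain ⟨t, ht, _, hs, hts⟩ := hwx
  obtain ⟨μ, rfl⟩ := Submodule.mem_span_singleton.1 hs
  have hμ : μ • (v * w * x) ∈ algPow K A 4 := by
    have : μ • (v * w * x) = w * (x * x) - t * x := by
      rw [← mul_assoc, ← hts, add_mul, smul_mul_assoc]; abel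
    rw [this]
    exact sub_mem (mul_mem_algPow (i := 1) Submodule.mem_top hx) (mul_mem_algPow_succ ht x)
  obtain rfl : μ = 0 := by
    by_contra hμ0
    exact h4 ((Submodule.smul_mem_iff _ hμ0).1 hμ)
  rw [zero_smul, add_zero] at hts
  apply h4
  rw [mul_assoc, ← hts]
  exact mul_mem_algPow (i := 1) Submodule.mem_top ht

lemma algPow_eq_sup_span_mpow {x : A}
    (h2 : algPow K A 2 = algPow K A 3 ⊔ Submodule.span K {mpow x 2}) :
    ∀ i, 2 ≤ i → algPow K A i = algPow K A (i + 1) ⊔ Submodule.span K {mpow x i} := by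
  intro i hi
  induction i, hi using Nat.le_induction with
  | base => exact h2
  | succ i hi ih =>
    obtain ⟨n, rfl⟩ : ∃ n, i = n + 1 := ⟨i - 1, by omega⟩
    refine le_antisymm ?_
      (sup_le (algPow_succ_le _)
        ((Submodule.span_singleton_le_iff_mem _ _).2 (mpow_mem_algPow x _)))
    rw [algPow_add_two, Submodule.span_le]
    rintro _ ⟨c, hc, d, -, rfl⟩
    rw [SetLike.mem_coe, ih, Submodule.mem_sup] at hc
    obtain ⟨t, ht, _, hs, rfl⟩ := hc
    obtain ⟨c', rfl⟩ := Submodule.mem_span_singleton.1 hs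
    simp only [SetLike.mem_coe, add_mul, smul_mul_assoc]
    exact add_mem (Submodule.mem_sup_left (mul_mem_algPow_succ ht d))
      (Submodule.smul_mem _ _ (mpow_mul_mem_sup_span h2 (by omega) d))

end AlgPow

/-- Let `A` be an associative non-unital algebra over a field `K` with
`dim (Aⁱ/Aⁱ⁺¹) = 1` for all `i ≥ 2`. If `v, w, x ∈ A` are such that `v*w*x` spans `A³`
modulo `A⁴`, then `xⁱ` spans `Aⁱ` modulo `Aⁱ⁺¹` for every `i ≥ 2`. -/
theorem statement7 {K : Type*} [Field K] {A : Type*} [NonUnitalRing A] [Module K A]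
    [SMulCommClass K A A] [IsScalarTower K A A]
    (hdi : ∀ i, 2 ≤ i → algLayerDim K A i = 1)
    (v w x : A)
    (hvwx : algPow K A 3 = algPow K A 4 ⊔ Submodule.span K {v * w * x}) :
    ∀ i, 2 ≤ i → algPow K A i = algPow K A (i + 1) ⊔ Submodule.span K {mpow x i} := by
  have h4 : v * w * x ∉ algPow K A 4 :=
    ((algPow_eq_sup_span_iff (hdi 3 (by norm_num))).1 hvwx).2
  have h2 : algPow K A 2 = algPow K A 3 ⊔ Submodule.span K {v * w} :=
    (algPow_eq_sup_span_iff (hdi 2 le_rfl)).2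
      ⟨mul_mem_algPow_succ (i := 1) Submodule.mem_top w, fun h => h4 (mul_mem_algPow_succ h x)⟩
  have hx2 : algPow K A 2 = algPow K A 3 ⊔ Submodule.span K {mpow x 2} :=
    (algPow_eq_sup_span_iff (hdi 2 le_rfl)).2
      ⟨mpow_mem_algPow x 2, mul_self_notMem_algPow_three h2 h4⟩
  exact algPow_eq_sup_span_mpow hx2
end

section
/- For each n ≥ 5 and 2 ≤ k ≤ n-1, let H_k be the semigroup with zero presented by ⟨u, v | u^{n-1} = u^n, uv = u^k, vu = u^k, v^2 = u^{2k-2}⟩ (a nilpotent semigroup of order n, where u^{n-1} acts as zero). Then for any field K and any 3 ≤ k ≤ n-1, the contracted semigroup algebras K H_2 and K H_k are isomorphic as K-algebras; an isomorphism is induced by u ↦ u + u^{k-1}, v ↦ u + v. -/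
/-- `IsCC1Sg n a b c S u v` asserts that `S` is the nilpotent semigroup of order `n`
with zero given by the presentation
`⟨u, v ∣ u^(n-1) = u^n, u*v = u^a, v*u = u^b, v*v = u^c⟩`:
its distinct elements are `u, u², …, u^(n-2), v` and the zero `u^(n-1)`. -/
def IsCC1Sg (n a b c : ℕ) (S : Type*) [SemigroupWithZero S] (u v : S) : Prop :=
  mpow u (n - 1) = 0 ∧ u * v = mpow u a ∧ v * u = mpow u b ∧ v * v = mpow u c ∧
  v ≠ 0 ∧ (∀ i, 1 ≤ i → i ≤ n - 2 → mpow u i ≠ 0) ∧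
  (∀ i j, 1 ≤ i → i ≤ n - 2 → 1 ≤ j → j ≤ n - 2 → mpow u i = mpow u j → i = j) ∧
  (∀ i, 1 ≤ i → i ≤ n - 2 → v ≠ mpow u i) ∧
  (∀ s : S, s = 0 ∨ s = v ∨ ∃ i, 1 ≤ i ∧ i ≤ n - 2 ∧ s = mpow u i)

/-!
In `K Hₖ` the element `z = v - uᵏ⁻¹` annihilates everything, because `v` multiplies like `uᵏ⁻¹`
in `Hₖ`. Hence `c = u + uᵏ⁻¹` and `d = u + v = c + z` satisfy the defining relations of `H₂`:
`cd = dc = d² = c²`, and `cⁿ⁻¹ = 0` because `cⁱ ≡ uⁱ` modulo `span {uⁱ⁺¹, uⁱ⁺², …}`. This gives an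
algebra map `K H₂ → K Hₖ`. It is onto: by descending induction along the same filtration, `u` lies
in the subalgebra generated by `c`, and then so does `v = d - u`. Both algebras have dimension
`n - 1`, so the map is bijective.
-/

section Mpow

variable {M : Type*}

lemma mpow_one [Mul M] (x : M) : mpow x 1 = x := rfl

lemma mpow_succ [Mul M] (x : M) {i : ℕ} (hi : 1 ≤ i) : mpow x (i + 1) = mpow x i * x := by
  obtain ⟨j, rfl⟩ := Nat.exists_eq_add_of_le' hi
  rfl

lemma mpow_add [Semigroup M] (x : M) {i j : ℕ} (hi : 1 ≤ i) (hj : 1 ≤ j) :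
    mpow x (i + j) = mpow x i * mpow x j := by
  induction j, hj using Nat.le_induction with
  | base => exact mpow_succ x hi
  | succ j hj ih => rw [← add_assoc, mpow_succ x (by omega), ih, mpow_succ x hj, mul_assoc]

lemma mpow_mul_of_mul_eq [Semigroup M] {x y : M} {a : ℕ} (ha : 1 ≤ a) (h : x * y = mpow x a)
    {i : ℕ} (hi : 1 ≤ i) : mpow x i * y = mpow x (i + a - 1) := by
  induction i, hi using Nat.le_induction with
  | base => simpa [mpow_one] using h
  | succ i hi ih =>
    rw [mpow_succ x hi, mul_assoc, h, ← mpow_add x hi ha]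
    congr 1
    omega

lemma mul_mpow_of_mul_eq [Semigroup M] {x y : M} {a : ℕ} (ha : 1 ≤ a) (h : y * x = mpow x a)
    {i : ℕ} (hi : 1 ≤ i) : y * mpow x i = mpow x (a + i - 1) := by
  induction i, hi using Nat.le_induction with
  | base => simpa [mpow_one] using h
  | succ i hi ih =>
    rw [mpow_succ x hi, ← mul_assoc, ih, ← mpow_succ x (by omega)]
    congr 1
    omega

lemma mpow_eq_zero_of_le [SemigroupWithZero M] {x : M} {N : ℕ} (hN : 1 ≤ N)
    (hx : mpow x N = 0) {m : ℕ} (hm : N ≤ m) : mpow x m = 0 := by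
  obtain rfl | hlt := hm.eq_or_lt
  · exact hx
  · rw [← Nat.add_sub_cancel' hm, mpow_add x hN (by omega), hx, zero_mul]

lemma map_mpow {N : Type*} [Mul M] [Mul N] {f : M → N} (hf : ∀ x y, f (x * y) = f x * f y)
    (x : M) : ∀ i, f (mpow x i) = mpow (f x) i
  | 0 => rfl
  | 1 => rfl
  | i + 2 => by rw [mpow, hf, map_mpow hf x (i + 1), mpow]

lemma mpow_mem [Mul M] {σ : Type*} [SetLike σ M] [MulMemClass σ M] {S : σ} {x : M}
    (hx : x ∈ S) : ∀ i, mpow x i ∈ S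
  | 0 => hx
  | 1 => hx
  | i + 2 => mul_mem (mpow_mem hx (i + 1)) hx

end Mpow

section MpowSpan

variable (K : Type*) {R : Type*} [CommRing K] [NonUnitalRing R] [Module K R]

def mpowSpan (t : R) (i : ℕ) : Submodule K R :=
  Submodule.span K (Set.range fun j => mpow t (i + j))

variable {K} {t c : R}

lemma mpow_mem_mpowSpan {i j : ℕ} (h : i ≤ j) : mpow t j ∈ mpowSpan K t i :=
  Submodule.subset_span ⟨j - i, by dsimp only; rw [Nat.add_sub_cancel' h]⟩

lemma mpowSpan_anti {i i' : ℕ} (h : i ≤ i') : mpowSpan K t i' ≤ mpowSpan K t i :=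
  Submodule.span_le.2 <| Set.range_subset_iff.2 fun _ => mpow_mem_mpowSpan (by omega)

lemma mpowSpan_eq_bot {N : ℕ} (hN : 1 ≤ N) (ht : mpow t N = 0) {i : ℕ} (hi : N ≤ i) :
    mpowSpan K t i = ⊥ := by
  rw [mpowSpan, Submodule.span_eq_bot]
  rintro _ ⟨j, rfl⟩
  exact mpow_eq_zero_of_le hN ht (by omega)

variable [SMulCommClass K R R] [IsScalarTower K R R]

lemma mul_mem_mpowSpan {i j : ℕ} (hi : 1 ≤ i) (hj : 1 ≤ j) {x y : R}
    (hx : x ∈ mpowSpan K t i) (hy : y ∈ mpowSpan K t j) : x * y ∈ mpowSpan K t (i + j) := by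
  have hle : Submodule.map₂ (LinearMap.mul K R) (mpowSpan K t i) (mpowSpan K t j) ≤
      mpowSpan K t (i + j) := by
    rw [mpowSpan, mpowSpan, Submodule.map₂_span_span, Submodule.span_le]
    rintro _ ⟨_, ⟨a, rfl⟩, _, ⟨b, rfl⟩, rfl⟩
    dsimp only
    rw [LinearMap.mul_apply', ← mpow_add t (by omega) (by omega)]
    exact mpow_mem_mpowSpan (by omega)
  exact hle (Submodule.apply_mem_map₂ _ hx hy)

lemma mpow_sub_mpow_mem_mpowSpan (hct : c - t ∈ mpowSpan K t 2) {i : ℕ} (hi : 1 ≤ i) :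
    mpow c i - mpow t i ∈ mpowSpan K t (i + 1) := by
  have hc : c ∈ mpowSpan K t 1 := by
    have h := add_mem (mpow_mem_mpowSpan (K := K) (t := t) le_rfl) (mpowSpan_anti one_le_two hct)
    rwa [mpow_one, add_sub_cancel] at h
  induction i, hi using Nat.le_induction with
  | base => exact hct
  | succ i hi ih =>
    have hsplit : mpow c (i + 1) - mpow t (i + 1) =
        (mpow c i - mpow t i) * c + mpow t i * (c - t) := by
      rw [mpow_succ c hi, mpow_succ t hi, sub_mul, mul_sub]
      abel
    rw [hsplit]
    exact add_mem (mul_mem_mpowSpan (by omega) le_rfl ih hc)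
      (mul_mem_mpowSpan (j := 2) hi (by omega) (mpow_mem_mpowSpan le_rfl) hct)

lemma mpow_eq_zero_of_sub_mem_mpowSpan {N : ℕ} (hN : 1 ≤ N) (ht : mpow t N = 0)
    (hct : c - t ∈ mpowSpan K t 2) : mpow c N = 0 := by
  have h := mpow_sub_mpow_mem_mpowSpan hct hN
  rwa [mpowSpan_eq_bot hN ht (by omega), Submodule.mem_bot, ht, sub_zero] at h

lemma mem_of_sub_mem_mpowSpan {S : NonUnitalSubalgebra K R} {N : ℕ} (hN : 1 ≤ N)
    (ht : mpow t N = 0) (hc : c ∈ S) (hct : c - t ∈ mpowSpan K t 2) : t ∈ S := by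
  -- Descending induction on `i`: `span {tⁱ, tⁱ⁺¹, …} ⊆ S`, since `tⁱ = cⁱ - (cⁱ - tⁱ)`.
  have key : ∀ d i, 1 ≤ i → N ≤ i + d → mpowSpan K t i ≤ S.toSubmodule := by
    intro d
    induction d with
    | zero =>
      intro i _ hi
      rw [mpowSpan_eq_bot hN ht (by omega)]
      exact bot_le
    | succ d ih =>
      intro i hi hid
      have hnext := ih (i + 1) (by omega) (by omega)
      refine Submodule.span_le.2 (Set.range_subset_iff.2 fun j => ?_)
      rcases j with _ | j
      · have h := sub_mem (mpow_mem hc i) (hnext (mpow_sub_mpow_mem_mpowSpan hct hi))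
        rwa [sub_sub_cancel] at h
      · exact hnext (mpow_mem_mpowSpan (by omega))
  exact key N 1 le_rfl (by omega) (mpow_mem_mpowSpan (i := 1) le_rfl)

end MpowSpan

namespace IsContractedAlgebra

variable {K S A : Type*} [Field K] [SemigroupWithZero S] [NonUnitalRing A] [Module K A]
  {f : S → A}

noncomputable def basis (hf : IsContractedAlgebra K f) : Module.Basis {s : S // s ≠ 0} K A :=
  Module.Basis.mk hf.2.2.1 hf.2.2.2.ge

lemma basis_apply (hf : IsContractedAlgebra K f) (s : {s : S // s ≠ 0}) : hf.basis s = f s :=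
  Module.Basis.mk_apply _ _ _

lemma finrank_eq (hf : IsContractedAlgebra K f) :
    Module.finrank K A = Nat.card {s : S // s ≠ 0} :=
  Module.finrank_eq_nat_card_basis hf.basis

lemma bijective_of_surjective (hf : IsContractedAlgebra K f) {T B : Type*} [SemigroupWithZero T]
    [NonUnitalRing B] [Module K B] {g : T → B} (hg : IsContractedAlgebra K g)
    [Finite {s : S // s ≠ 0}] [Finite {t : T // t ≠ 0}]
    (hcard : Nat.card {s : S // s ≠ 0} = Nat.card {t : T // t ≠ 0}) {F : Type*} [FunLike F A B]
    [LinearMapClass F K A B] {e : F} (he : Function.Surjective e) : Function.Bijective e := by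
  have := Module.Finite.of_basis hf.basis
  have := Module.Finite.of_basis hg.basis
  have hdim : Module.finrank K A = Module.finrank K B := by
    rw [hf.finrank_eq, hg.finrank_eq, hcard]
  exact ⟨(LinearMap.injective_iff_surjective_of_finrank_eq_finrank hdim (f := e)).2 he, he⟩

lemma surjective_of_forall_mem_range (hf : IsContractedAlgebra K f) {C : Type*}
    [NonUnitalRing C] [Module K C] {e : C →ₙₐ[K] A} (h : ∀ s, f s ∈ NonUnitalAlgHom.range e) :
    Function.Surjective e := by
  have htop : (NonUnitalAlgHom.range e).toSubmodule = ⊤ :=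
    eq_top_iff.2 <| hf.2.2.2 ▸ Submodule.span_le.2 (Set.range_subset_iff.2 fun s => h s)
  intro y
  have hy : y ∈ (NonUnitalAlgHom.range e).toSubmodule := htop ▸ Submodule.mem_top
  exact (NonUnitalAlgHom.mem_range e).1 hy

variable [SMulCommClass K A A] [IsScalarTower K A A]

lemma exists_nonUnitalAlgHom (hf : IsContractedAlgebra K f) {B : Type*} [NonUnitalRing B]
    [Module K B] [SMulCommClass K B B] [IsScalarTower K B B] {φ : S → B} (hφ0 : φ 0 = 0)
    (hφ : ∀ s t, φ (s * t) = φ s * φ t) : ∃ e : A →ₙₐ[K] B, ∀ s, e (f s) = φ s := by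
  let e : A →ₗ[K] B := hf.basis.constr K fun s => φ s
  have he : ∀ s, e (f s) = φ s := by
    intro s
    by_cases hs : s = 0
    · rw [hs, hf.1, map_zero, hφ0]
    · rw [← hf.basis_apply ⟨s, hs⟩, Module.Basis.constr_basis]
  have hmul : (LinearMap.mul K A).compr₂ e = (LinearMap.mul K B).compl₁₂ e e :=
    hf.basis.ext fun s => hf.basis.ext fun t => by
      simp only [LinearMap.compr₂_apply, LinearMap.compl₁₂_apply, LinearMap.mul_apply',
        basis_apply, ← hf.2.1, he, hφ]
  exact ⟨{ e with map_zero' := e.map_zero, map_mul' := LinearMap.congr_fun₂ hmul }, he⟩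

lemma mem_twoSidedAnn (hf : IsContractedAlgebra K f) {z : A} (hl : ∀ s, z * f s = 0)
    (hr : ∀ s, f s * z = 0) : z ∈ twoSidedAnn K A := by
  have hleft : LinearMap.mulLeft K z = 0 := hf.basis.ext fun s => by simp [basis_apply, hl]
  have hright : LinearMap.mulRight K z = 0 := hf.basis.ext fun s => by simp [basis_apply, hr]
  exact ⟨fun b => LinearMap.congr_fun hleft b, fun b => LinearMap.congr_fun hright b⟩

end IsContractedAlgebra

namespace IsCC1Sg

variable {n a b c : ℕ} {S : Type*} [SemigroupWithZero S] {u v : S}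

lemma setOf_ne_zero_eq (hS : IsCC1Sg n a b c S u v) :
    {s : S | s ≠ 0} = insert v (mpow u '' Set.Icc 1 (n - 2)) := by
  obtain ⟨-, -, -, -, hv0, hne, -, -, hcl⟩ := hS
  ext s
  constructor
  · intro hs
    rcases hcl s with h | h | ⟨i, hi1, hi2, rfl⟩
    · exact absurd h hs
    · exact Or.inl h
    · exact Or.inr ⟨i, ⟨hi1, hi2⟩, rfl⟩
  · rintro (rfl | ⟨i, ⟨hi1, hi2⟩, rfl⟩)
    · exact hv0
    · exact hne i hi1 hi2

lemma finite_nonzero (hS : IsCC1Sg n a b c S u v) : Finite {s : S // s ≠ 0} :=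
  (hS.setOf_ne_zero_eq ▸ ((Set.finite_Icc 1 (n - 2)).image (mpow u)).insert v).to_subtype

lemma natCard_nonzero (hS : IsCC1Sg n a b c S u v) (hn : 2 ≤ n) :
    Nat.card {s : S // s ≠ 0} = n - 1 := by
  have hinj : Set.InjOn (mpow u) (Set.Icc 1 (n - 2)) :=
    fun i hi j hj h => hS.2.2.2.2.2.2.1 i j hi.1 hi.2 hj.1 hj.2 h
  have hv : v ∉ mpow u '' Set.Icc 1 (n - 2) := by
    rintro ⟨i, hi, h⟩
    exact hS.2.2.2.2.2.2.2.1 i hi.1 hi.2 h.symm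
  rw [show Nat.card {s : S // s ≠ 0} = {s : S | s ≠ 0}.ncard from Nat.card_coe_set_eq _,
    hS.setOf_ne_zero_eq,
    Set.ncard_insert_of_notMem hv ((Set.finite_Icc _ _).image _), hinj.ncard_image,
    Set.ncard_Icc_nat]
  omega

lemma exists_lift (hS : IsCC1Sg n a b c S u v) (hn : 2 ≤ n) (ha : 1 ≤ a) (hb : 1 ≤ b)
    {M : Type*} [SemigroupWithZero M] {x y : M} (hx : mpow x (n - 1) = 0)
    (hxy : x * y = mpow x a) (hyx : y * x = mpow x b) (hyy : y * y = mpow x c) :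
    ∃ φ : S → M, φ 0 = 0 ∧ (∀ s t, φ (s * t) = φ s * φ t) ∧ φ u = x ∧ φ v = y := by
  classical
  obtain ⟨hu0, huv, hvu, hvv, hv0, hne, hinj, hvne, hcl⟩ := hS
  let φ : S → M := fun s => if s = v then y else
    if h : ∃ i, 1 ≤ i ∧ i ≤ n - 2 ∧ s = mpow u i then mpow x h.choose else 0
  have hφ0 : φ 0 = 0 := by
    dsimp only [φ]
    rw [if_neg (Ne.symm hv0), dif_neg]
    rintro ⟨i, hi1, hi2, h⟩
    exact hne i hi1 hi2 h.symm
  have hφv : φ v = y := if_pos rfl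
  have hφpow' : ∀ i, 1 ≤ i → φ (mpow u i) = mpow x i := by
    intro i hi
    by_cases hin : i ≤ n - 2
    · have hex : ∃ j, 1 ≤ j ∧ j ≤ n - 2 ∧ mpow u i = mpow u j := ⟨i, hi, hin, rfl⟩
      obtain ⟨hj1, hj2, hj⟩ := hex.choose_spec
      dsimp only [φ]
      rw [if_neg (hvne i hi hin).symm, dif_pos hex, hinj _ _ hj1 hj2 hi hin hj.symm]
    · rw [mpow_eq_zero_of_le (by omega) hu0 (by omega : n - 1 ≤ i), hφ0,
        mpow_eq_zero_of_le (by omega) hx (by omega : n - 1 ≤ i)]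
  have hφpow : ∀ i, φ (mpow u i) = mpow x i
    | 0 => hφpow' 1 le_rfl
    | i + 1 => hφpow' (i + 1) (by omega)
  refine ⟨φ, hφ0, fun s t => ?_, hφpow 1, hφv⟩
  rcases hcl s with rfl | rfl | ⟨i, hi, -, rfl⟩
  · rw [zero_mul, hφ0, zero_mul]
  · rcases hcl t with rfl | rfl | ⟨j, hj, -, rfl⟩
    · rw [mul_zero, hφ0, mul_zero]
    · rw [hvv, hφpow, hφv, hyy]
    · rw [mul_mpow_of_mul_eq hb hvu hj, hφpow, hφpow, hφv, mul_mpow_of_mul_eq hb hyx hj]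
  · rcases hcl t with rfl | rfl | ⟨j, hj, -, rfl⟩
    · rw [mul_zero, hφ0, mul_zero]
    · rw [mpow_mul_of_mul_eq ha huv hi, hφpow, hφpow, hφv, mpow_mul_of_mul_eq ha hxy hi]
    · rw [← mpow_add u hi hj, hφpow, hφpow, hφpow, mpow_add x hi hj]

lemma map_mem {B σ : Type*} [Mul B] [Zero B] [SetLike σ B] [MulMemClass σ B]
    [ZeroMemClass σ B] (hS : IsCC1Sg n a b c S u v) {g : S → B} (hg0 : g 0 = 0)
    (hg : ∀ s t, g (s * t) = g s * g t) {T : σ} (hu : g u ∈ T) (hv : g v ∈ T) (s : S) :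
    g s ∈ T := by
  rcases hS.2.2.2.2.2.2.2.2 s with rfl | rfl | ⟨i, -, -, rfl⟩
  · exact hg0 ▸ zero_mem T
  · exact hv
  · exact map_mpow hg u i ▸ mpow_mem hu i

lemma mul_eq_mpow_mul {k : ℕ} (hS : IsCC1Sg n k k (2 * k - 2) S u v) (hk : 2 ≤ k) (s : S) :
    v * s = mpow u (k - 1) * s ∧ s * v = s * mpow u (k - 1) := by
  obtain ⟨-, huv, hvu, hvv, -, -, -, -, hcl⟩ := hS
  have hvpow : ∀ i, 1 ≤ i → v * mpow u i = mpow u (k - 1) * mpow u i := fun i hi => by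
    rw [mul_mpow_of_mul_eq (by omega) hvu hi, ← mpow_add u (by omega) hi]
    congr 1
    omega
  have hpowv : ∀ i, 1 ≤ i → mpow u i * v = mpow u i * mpow u (k - 1) := fun i hi => by
    rw [mpow_mul_of_mul_eq (by omega) huv hi, ← mpow_add u hi (by omega)]
    congr 1
    omega
  have hvv' : v * v = mpow u (k - 1) * v := by
    rw [hvv, hpowv _ (by omega), ← mpow_add u (by omega) (by omega)]
    congr 1
    omega
  rcases hcl s with rfl | rfl | ⟨i, hi, -, rfl⟩
  · simp only [mul_zero, zero_mul, and_self]
  · exact ⟨hvv', hvv'.trans ((hpowv _ (by omega)).trans (hvpow _ (by omega)).symm)⟩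
  · exact ⟨hvpow i hi, hpowv i hi⟩

lemma sub_mem_twoSidedAnn {k : ℕ} (hS : IsCC1Sg n k k (2 * k - 2) S u v) (hk : 2 ≤ k)
    {K B : Type*} [Field K] [NonUnitalRing B] [Module K B] [SMulCommClass K B B]
    [IsScalarTower K B B] {g : S → B} (hg : IsContractedAlgebra K g) :
    g v - mpow (g u) (k - 1) ∈ twoSidedAnn K B := by
  rw [← map_mpow hg.2.1]
  refine hg.mem_twoSidedAnn (fun s => ?_) (fun s => ?_)
  · rw [sub_mul, ← hg.2.1, ← hg.2.1, (hS.mul_eq_mpow_mul hk s).1, sub_self]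
  · rw [mul_sub, ← hg.2.1, ← hg.2.1, (hS.mul_eq_mpow_mul hk s).2, sub_self]

end IsCC1Sg

theorem statement8_general {K : Type*} [Field K] (n k : ℕ) (hn : 5 ≤ n) (hk1 : 3 ≤ k)
    {S₂ : Type*} [SemigroupWithZero S₂] (u₂ v₂ : S₂)
    (h₂ : IsCC1Sg n 2 2 2 S₂ u₂ v₂)
    {Sₖ : Type*} [SemigroupWithZero Sₖ] (uₖ vₖ : Sₖ)
    (hₖ : IsCC1Sg n k k (2 * k - 2) Sₖ uₖ vₖ)
    {A : Type*} [NonUnitalRing A] [Module K A] [SMulCommClass K A A] [IsScalarTower K A A]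
    {B : Type*} [NonUnitalRing B] [Module K B] [SMulCommClass K B B] [IsScalarTower K B B]
    (f : S₂ → A) (hf : IsContractedAlgebra K f)
    (g : Sₖ → B) (hg : IsContractedAlgebra K g) :
    ∃ e : A →ₙₐ[K] B, Function.Bijective e ∧
      e (f u₂) = g uₖ + g (mpow uₖ (k - 1)) ∧ e (f v₂) = g uₖ + g vₖ := by
  set t := g uₖ
  set c := t + mpow t (k - 1)
  set z := g vₖ - mpow t (k - 1)
  have hz : z ∈ twoSidedAnn K B := hₖ.sub_mem_twoSidedAnn (by omega) hg
  have hct : c - t ∈ mpowSpan K t 2 := by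
    rw [add_sub_cancel_left]
    exact mpow_mem_mpowSpan (by omega)
  have ht : mpow t (n - 1) = 0 := by rw [← map_mpow hg.2.1, hₖ.1, hg.1]
  -- `z` annihilates `B`, so `(c, c + z)` satisfies the defining relations of `H₂`.
  obtain ⟨φ, hφ0, hφ, hφu, hφv⟩ := h₂.exists_lift (x := c) (y := c + z) (by omega) one_le_two
    one_le_two (mpow_eq_zero_of_sub_mem_mpowSpan (by omega) ht hct)
    (by rw [mul_add, hz.2, add_zero]; rfl) (by rw [add_mul, hz.1, add_zero]; rfl)
    (by rw [mul_add, hz.2, add_zero, add_mul, hz.1, add_zero]; rfl)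
  obtain ⟨e, he⟩ := hf.exists_nonUnitalAlgHom hφ0 hφ
  have hcz : c + z ∈ NonUnitalAlgHom.range e := ⟨f v₂, (he v₂).trans hφv⟩
  have htmem : t ∈ NonUnitalAlgHom.range e :=
    mem_of_sub_mem_mpowSpan (by omega) ht ⟨f u₂, (he u₂).trans hφu⟩ hct
  have hvmem : g vₖ ∈ NonUnitalAlgHom.range e := by simpa [c, z] using sub_mem hcz htmem
  have := h₂.finite_nonzero
  have := hₖ.finite_nonzero
  refine ⟨e, hf.bijective_of_surjective hg ?_ ?_, ?_, ?_⟩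
  · rw [h₂.natCard_nonzero (by omega), hₖ.natCard_nonzero (by omega)]
  · exact hg.surjective_of_forall_mem_range (hₖ.map_mem hg.1 hg.2.1 htmem hvmem)
  · rw [he, hφu, map_mpow hg.2.1]
  · rw [he, hφv, add_add_sub_cancel]

/-- For `n ≥ 5` and `3 ≤ k ≤ n - 1`, the contracted semigroup algebras `K H₂` and `K Hₖ`
of the coclass-one semigroups
`H_k = ⟨u, v ∣ u^(n-1) = uⁿ, u*v = uᵏ, v*u = uᵏ, v² = u^(2k-2)⟩` of order `n`
are isomorphic, via an isomorphism induced by `u ↦ u + u^(k-1)`, `v ↦ u + v`. -/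
theorem statement8 {K : Type*} [Field K] (n k : ℕ) (hn : 5 ≤ n) (hk1 : 3 ≤ k)
    (hk2 : k ≤ n - 1)
    {S₂ : Type*} [SemigroupWithZero S₂] (u₂ v₂ : S₂)
    (h₂ : IsCC1Sg n 2 2 2 S₂ u₂ v₂)
    {Sₖ : Type*} [SemigroupWithZero Sₖ] (uₖ vₖ : Sₖ)
    (hₖ : IsCC1Sg n k k (2 * k - 2) Sₖ uₖ vₖ)
    {A : Type*} [NonUnitalRing A] [Module K A] [SMulCommClass K A A] [IsScalarTower K A A]
    {B : Type*} [NonUnitalRing B] [Module K B] [SMulCommClass K B B] [IsScalarTower K B B]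
    (f : S₂ → A) (hf : IsContractedAlgebra K f)
    (g : Sₖ → B) (hg : IsContractedAlgebra K g) :
    ∃ e : A →ₙₐ[K] B, Function.Bijective e ∧
      e (f u₂) = g uₖ + g (mpow uₖ (k - 1)) ∧ e (f v₂) = g uₖ + g vₖ :=
  statement8_general n k hn hk1 u₂ v₂ h₂ uₖ vₖ hₖ f hf g hg
end
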